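/- Let g_1,…,g_d : [0,1] → ℝ^n be Lipschitz paths, with components g_j = (g_{1,j},…,g_{n,j}), and define x : [0,1]^d → ℝ^n by x(s_1,…,s_d) := Σ_{j=1}^d g_j(s_j), so x ∈ Lip(□^d, ℝ^n). Then for every m ≥ 1 and every level-m index (P,π) ∈ O_{d,n}^m × Σ_m^d: Φ_m^{P,π}(x) = Σ over σ = (σ_1,…,σ_m) ∈ Σ_d^m of (∏_{i=1}^m sign(σ_i)) · ∏_{j=1}^d S_m^{Q(P,π,σ,j)}(g_j), where Q(P,π,σ,j) ∈ {1,…,n}^m is the multi-index whose i-th entry is P_{π_j(i)}(σ_{π_j(i)}^{-1}(j)). -/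

import Mathlib

open MeasureTheory

open scoped Classical

noncomputable section

/-- The unit cube `[0,1]^d` as a subset of `Fin d → ℝ`. -/
def unitCube (d : ℕ) : Set (Fin d → ℝ) := Set.Icc 0 1

/-- Lipschitz condition with constant `L`, with respect to Euclidean norms. -/
def EuclidLip {d n : ℕ} (L : ℝ) (x : (Fin d → ℝ) → Fin n → ℝ) : Prop :=
  ∀ s t : Fin d → ℝ,
    Real.sqrt (∑ k, (x s k - x t k) ^ 2) ≤ L * Real.sqrt (∑ j, (s j - t j) ^ 2)

/-- Lipschitz map. -/
def IsLipMap {d n : ℕ} (x : (Fin d → ℝ) → Fin n → ℝ) : Prop :=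
  ∃ L : ℝ, EuclidLip L x

/-- The Jacobian minor `J[x_P](s)`: the determinant of the `d × d` matrix
with `(i,j)` entry `∂ x_{P i} / ∂ s_j (s)`. -/
def jacobianMinor {d n : ℕ} (x : (Fin d → ℝ) → Fin n → ℝ) (P : Fin d → Fin n)
    (s : Fin d → ℝ) : ℝ :=
  (Matrix.of fun i j : Fin d => fderiv ℝ (fun t => x t (P i)) s (Pi.single j 1)).det

/-- The permuted `m`-simplex `Δ^m_π(a,b)`. -/
def permSimplex {m : ℕ} (π : Equiv.Perm (Fin m)) (a b : ℝ) : Set (Fin m → ℝ) :=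
  {u | (∀ i, u i ∈ Set.Icc a b) ∧ StrictMono fun i => u (π i)}

/-- The integration domain `D^{m,d}_π(a,b) = Δ^m_{π 1}(a₁,b₁) × ⋯ × Δ^m_{π d}(a_d,b_d)`. -/
def intDomain {m d : ℕ} (π : Fin d → Equiv.Perm (Fin m)) (a b : Fin d → ℝ) :
    Set (Fin m → Fin d → ℝ) :=
  {t | ∀ j, (fun i => t i j) ∈ permSimplex (π j) (a j) (b j)}

/-- The restricted mapping space monomial `Φ_m^{P,π}(x)_{a,b}`. -/
def msMonomialOn {d n m : ℕ} (x : (Fin d → ℝ) → Fin n → ℝ)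
    (P : Fin m → Fin d → Fin n) (π : Fin d → Equiv.Perm (Fin m))
    (a b : Fin d → ℝ) : ℝ :=
  ∫ t in intDomain π a b, ∏ i, jacobianMinor x (P i) (t i)

/-- The mapping space monomial `Φ_m^{P,π}(x)`. -/
def msMonomial {d n m : ℕ} (x : (Fin d → ℝ) → Fin n → ℝ)
    (P : Fin m → Fin d → Fin n) (π : Fin d → Equiv.Perm (Fin m)) : ℝ :=
  msMonomialOn x P π (fun _ => 0) (fun _ => 1)

/-- Lipschitz path (Euclidean norm on the codomain). -/
def IsLipPath {n : ℕ} (g : ℝ → Fin n → ℝ) : Prop :=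
  ∃ L : ℝ, ∀ u v : ℝ, Real.sqrt (∑ k, (g u k - g v k) ^ 2) ≤ L * |u - v|

/-- The path signature monomial `S_m^Q(g) = ∫_{0 ≤ u₁ < ⋯ < u_m ≤ 1} ∏ g'_{Q i}(u_i) du`. -/
def pathSig {n : ℕ} (m : ℕ) (g : ℝ → Fin n → ℝ) (Q : Fin m → Fin n) : ℝ :=
  ∫ u in permSimplex (1 : Equiv.Perm (Fin m)) 0 1,
    ∏ i, deriv (fun v => g v (Q i)) (u i)

/-!
By Rademacher's theorem the paths `g_j` are differentiable almost everywhere. At such points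
each coordinate of `x` is a sum of functions of one variable, so the Jacobian minor `J[x_Q](s)`
is the determinant of `(g'_{b, Q a}(s_b))_{a b}`. Expanding each of the `m` determinants by the
Leibniz formula turns the integrand into a signed sum over `σ ∈ Σ_d^m` of products
`∏ i ∏ j f_{i j}(t_{i j})`. The domain `D_π` is a product over the columns `j`, so by Fubini
each of these integrals factors into integrals over the simplices `Δ_{π_j}`, and relabelling
the coordinates by `π_j` turns these into signature monomials.
-/

open Finset

lemma IsLipPath.exists_lipschitzWith_apply {n : ℕ} {g : ℝ → Fin n → ℝ} (hg : IsLipPath g)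
    (k : Fin n) : ∃ C : NNReal, LipschitzWith C fun v => g v k := by
  obtain ⟨L, hL⟩ := hg
  refine ⟨L.toNNReal, LipschitzWith.of_dist_le_mul fun u v => ?_⟩
  rw [Real.dist_eq, Real.dist_eq]
  calc |g u k - g v k| ≤ √(∑ k', (g u k' - g v k') ^ 2) :=
        Real.abs_le_sqrt (single_le_sum (fun k' _ => sq_nonneg (g u k' - g v k')) (mem_univ k))
    _ ≤ L * |u - v| := hL u v
    _ ≤ L.toNNReal * |u - v| := by gcongr; exact L.le_coe_toNNReal

lemma measurableSet_permSimplex {m : ℕ} (π : Equiv.Perm (Fin m)) (a b : ℝ) :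
    MeasurableSet (permSimplex π a b) := by
  have h : permSimplex π a b = Set.Icc (fun _ => a) (fun _ => b) ∩
      ⋂ (i) (i') (_ : i < i'), {u : Fin m → ℝ | u (π i) < u (π i')} := by
    ext u
    simp [permSimplex, StrictMono, Pi.le_def, forall_and]
  rw [h]
  exact measurableSet_Icc.inter <|
    .iInter fun _ => .iInter fun _ => .iInter fun _ =>
      measurableSet_lt (measurable_pi_apply _) (measurable_pi_apply _)

lemma measurableSet_intDomain {m d : ℕ} (π : Fin d → Equiv.Perm (Fin m)) (a b : Fin d → ℝ) :
    MeasurableSet (intDomain π a b) := by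
  simp only [intDomain, Set.ofPred_forall]
  exact .iInter fun j => (measurableSet_permSimplex _ _ _).preimage (by fun_prop)

lemma volume_intDomain_lt_top {m d : ℕ} (π : Fin d → Equiv.Perm (Fin m)) (a b : Fin d → ℝ) :
    volume (intDomain π a b) < ⊤ := by
  refine (measure_mono fun t ht => ?_).trans_lt
    (isCompact_Icc (a := fun _ j => a j) (b := fun _ j => b j)).measure_lt_top
  exact ⟨fun i j => ((ht j).1 i).1, fun i j => ((ht j).1 i).2⟩

lemma integrableOn_prod_prod_of_abs_le {ι κ : Type*} [Fintype ι] [Fintype κ]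
    {s : Set (ι → κ → ℝ)} (hs : volume s ≠ ⊤) {f : ι → κ → ℝ → ℝ}
    (hf : ∀ i j, Measurable (f i j)) {C : ι → κ → ℝ} (hC : ∀ i j v, |f i j v| ≤ C i j) :
    IntegrableOn (fun t => ∏ i, ∏ j, f i j (t i j)) s := by
  refine Measure.integrableOn_of_bounded hs (Measurable.aestronglyMeasurable (by fun_prop))
    (M := ∏ i, ∏ j, C i j) (ae_of_all _ fun t => ?_)
  simp only [Real.norm_eq_abs, abs_prod]
  gcongr
  exact hC _ _ _

lemma ae_forall_apply_apply {ι κ α : Type*} [Fintype ι] [Fintype κ] [MeasureSpace α]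
    [SigmaFinite (volume : Measure α)] {p : κ → α → Prop} (hp : ∀ j, ∀ᵐ v, p j v) :
    ∀ᵐ t : ι → κ → α, ∀ i j, p j (t i j) :=
  ae_all_iff.2 fun _ => ae_all_iff.2 fun j =>
    (Measure.tendsto_eval_ae_ae.comp Measure.tendsto_eval_ae_ae).eventually (hp j)

lemma integral_prod_columns_eq_prod_integral {ι α : Type*} [Fintype ι] [MeasureSpace α]
    [SigmaFinite (volume : Measure α)] :
    ∀ (d : ℕ) (G : Fin d → (ι → α) → ℝ),
      ∫ t : ι → Fin d → α, ∏ j, G j (fun i => t i j) = ∏ j, ∫ u, G j u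
  | 0, G => by simp [volume_pi, Measure.pi_univ, measureReal_def]
  | d + 1, G => by
    -- `Ψ t = (t · 0, fun i j => t i j.succ)` splits off the first column
    let Ψ : (ι → Fin (d + 1) → α) ≃ᵐ (ι → α) × (ι → Fin d → α) :=
      (MeasurableEquiv.piCongrRight fun _ => MeasurableEquiv.piFinSuccAbove (fun _ => α) 0).trans
        (MeasurableEquiv.arrowProdEquivProdArrow α (Fin d → α) ι)
    have hΨ : MeasurePreserving Ψ :=
      (volume_measurePreserving_arrowProdEquivProdArrow α (Fin d → α) ι).comp
        (volume_preserving_pi fun _ => volume_preserving_piFinSuccAbove (fun _ => α) 0)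
    calc ∫ t : ι → Fin (d + 1) → α, ∏ j, G j (fun i => t i j)
        = ∫ t, (fun z : (ι → α) × (ι → Fin d → α) =>
            G 0 z.1 * ∏ j : Fin d, G j.succ (fun i => z.2 i j)) (Ψ t) := by
          refine integral_congr_ae (.of_forall fun t => ?_)
          show _ = G 0 (fun i => t i 0) * ∏ j : Fin d, G j.succ (fun i => t i (Fin.succAbove 0 j))
          simp only [Fin.prod_univ_succ, Fin.succAbove_zero]
      _ = (∫ u, G 0 u) * ∫ t : ι → Fin d → α, ∏ j : Fin d, G j.succ (fun i => t i j) := by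
          rw [hΨ.integral_comp' (g := fun z => G 0 z.1 * ∏ j : Fin d, G j.succ fun i => z.2 i j),
            Measure.volume_eq_prod]
          exact integral_prod_mul (G 0) fun t : ι → Fin d → α =>
            ∏ j : Fin d, G j.succ fun i => t i j
      _ = ∏ j, ∫ u, G j u := by
          rw [integral_prod_columns_eq_prod_integral d, Fin.prod_univ_succ]

lemma setIntegral_intDomain_prod_prod {m d : ℕ} (π : Fin d → Equiv.Perm (Fin m))
    (a b : Fin d → ℝ) (f : Fin m → Fin d → ℝ → ℝ) :
    ∫ t in intDomain π a b, ∏ i, ∏ j, f i j (t i j) =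
      ∏ j, ∫ u in permSimplex (π j) (a j) (b j), ∏ i, f i j (u i) := by
  simp_rw [← integral_indicator (measurableSet_intDomain _ _ _),
    ← integral_indicator (measurableSet_permSimplex _ _ _)]
  rw [← integral_prod_columns_eq_prod_integral]
  congr with t
  by_cases ht : t ∈ intDomain π a b
  · rw [Set.indicator_of_mem ht, prod_comm]
    exact prod_congr rfl fun j _ =>
      (Set.indicator_of_mem (ht j) (fun u => ∏ i, f i j (u i))).symm
  · obtain ⟨j, hj⟩ := not_forall.1 ht
    rw [Set.indicator_of_notMem ht, prod_eq_zero (mem_univ j) (Set.indicator_of_notMem hj _)]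

lemma setIntegral_permSimplex_prod {m : ℕ} (π : Equiv.Perm (Fin m)) (a b : ℝ)
    (h : Fin m → ℝ → ℝ) :
    ∫ u in permSimplex π a b, ∏ i, h i (u i) = ∫ u in permSimplex 1 a b, ∏ i, h (π i) (u i) := by
  set e := MeasurableEquiv.piCongrLeft (fun _ : Fin m => ℝ) π
  have he : ∀ v i, e v (π i) = v i := Equiv.piCongrLeft_apply_apply (fun _ => ℝ) π
  have hpre : e ⁻¹' permSimplex π a b = permSimplex 1 a b := by
    ext v
    simp only [permSimplex, Set.mem_preimage, Set.mem_ofPred_eq, he, Equiv.Perm.coe_one, id_eq]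
    exact and_congr_left' (π.forall_congr_right.symm.trans (by simp only [he]))
  rw [← (volume_measurePreserving_piCongrLeft _ π).setIntegral_preimage_emb
    e.measurableEmbedding, hpre]
  congr with v
  rw [← Equiv.prod_comp π]
  exact prod_congr rfl fun i _ => congrArg _ (he v i)

lemma Matrix.det_eq_sum_sign_mul_prod_inv {ι R : Type*} [Fintype ι] [DecidableEq ι] [CommRing R]
    (M : Matrix ι ι R) :
    M.det = ∑ σ : Equiv.Perm ι, ((Equiv.Perm.sign σ : ℤ) : R) * ∏ j, M (σ⁻¹ j) j := by
  rw [Matrix.det_apply', ← Equiv.sum_comp (Equiv.inv (Equiv.Perm ι))]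
  simp [Equiv.Perm.sign_inv]

lemma fderiv_sum_comp_eval_apply_single {ι : Type*} [Fintype ι] [DecidableEq ι]
    {f : ι → ℝ → ℝ} {s : ι → ℝ} (hf : ∀ j, DifferentiableAt ℝ (f j) (s j)) (b : ι) :
    fderiv ℝ (fun t : ι → ℝ => ∑ j, f j (t j)) s (Pi.single b 1) = deriv (f b) (s b) := by
  have H : HasFDerivAt (fun t : ι → ℝ => ∑ j, f j (t j))
      (∑ j, deriv (f j) (s j) • ContinuousLinearMap.proj j) s :=
    HasFDerivAt.fun_sum fun j _ => (hf j).hasDerivAt.comp_hasFDerivAt s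
      (ContinuousLinearMap.proj (R := ℝ) (φ := fun _ : ι => ℝ) j).hasFDerivAt
  simp [H.fderiv, Pi.single_apply]

lemma jacobianMinor_sum_eq_sum_sign_mul_prod_deriv {d n : ℕ} (g : Fin d → ℝ → Fin n → ℝ)
    (Q : Fin d → Fin n) {s : Fin d → ℝ} (hg : ∀ j k, DifferentiableAt ℝ (fun v => g j v k) (s j)) :
    jacobianMinor (fun s k => ∑ j, g j (s j) k) Q s =
      ∑ σ : Equiv.Perm (Fin d), ((Equiv.Perm.sign σ : ℤ) : ℝ) *
        ∏ j, deriv (fun v => g j v (Q (σ⁻¹ j))) (s j) := by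
  rw [jacobianMinor, Matrix.det_eq_sum_sign_mul_prod_inv]
  simp only [Matrix.of_apply, fderiv_sum_comp_eval_apply_single fun j => hg j _]

theorem stmt11_general (d n m : ℕ) (g : Fin d → ℝ → Fin n → ℝ) (hg : ∀ j, IsLipPath (g j))
    (P : Fin m → Fin d → Fin n) (π : Fin d → Equiv.Perm (Fin m)) :
    msMonomial (fun s k => ∑ j, g j (s j) k) P π =
      ∑ σ : Fin m → Equiv.Perm (Fin d),
        (∏ i, ((Equiv.Perm.sign (σ i) : ℤ) : ℝ)) *
          ∏ j, pathSig m (g j) (fun i => P (π j i) ((σ (π j i)).symm j)) := by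
  choose C hC using fun j k => (hg j).exists_lipschitzWith_apply k
  have hexpand : ∀ᵐ t, t ∈ intDomain π (fun _ => 0) (fun _ => 1) →
      ∏ i, jacobianMinor (fun s k => ∑ j, g j (s j) k) (P i) (t i) =
        ∑ σ : Fin m → Equiv.Perm (Fin d), (∏ i, ((Equiv.Perm.sign (σ i) : ℤ) : ℝ)) *
          ∏ i, ∏ j, deriv (fun v => g j v (P i ((σ i)⁻¹ j))) (t i j) := by
    filter_upwards [ae_forall_apply_apply fun j =>
      ae_all_iff.2 fun k => (hC j k).ae_differentiableAt] with t ht _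
    simp_rw [jacobianMinor_sum_eq_sum_sign_mul_prod_deriv g _ (ht _), Fintype.prod_sum,
      prod_mul_distrib]
  have hint (σ : Fin m → Equiv.Perm (Fin d)) := integrableOn_prod_prod_of_abs_le
    (volume_intDomain_lt_top π (fun _ => 0) (fun _ => 1)).ne
    (fun i j => measurable_deriv (fun v => g j v (P i ((σ i)⁻¹ j))))
    (fun i j _ => norm_deriv_le_of_lipschitz (hC _ _))
  rw [msMonomial, msMonomialOn, setIntegral_congr_ae (measurableSet_intDomain _ _ _) hexpand,
    integral_finsetSum _ fun σ _ => (hint σ).const_mul _]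
  refine sum_congr rfl fun σ _ => ?_
  rw [integral_const_mul, setIntegral_intDomain_prod_prod]
  congr 1
  exact prod_congr rfl fun j _ => setIntegral_permSimplex_prod _ _ _ _

/-- for `x(s) = Σ_j g_j(s_j)`, the mapping space monomials decompose
into path signature monomials of the `g_j`. -/
theorem stmt11 (d n m : ℕ) (hd : 1 ≤ d) (hn : d ≤ n) (hm : 1 ≤ m)
    (g : Fin d → ℝ → Fin n → ℝ) (hg : ∀ j, IsLipPath (g j))
    (P : Fin m → Fin d → Fin n) (hP : ∀ i, StrictMono (P i))
    (π : Fin d → Equiv.Perm (Fin m)) :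
    msMonomial (fun s k => ∑ j, g j (s j) k) P π =
      ∑ σ : Fin m → Equiv.Perm (Fin d),
        (∏ i, ((Equiv.Perm.sign (σ i) : ℤ) : ℝ)) *
          ∏ j, pathSig m (g j) (fun i => P (π j i) ((σ (π j i)).symm j)) :=
  stmt11_general d n m g hg P π

end
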